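/- For every positive integer n and every real number α, the n×n Hankel determinant det(α·m_{i+j} + m_{i+j+1})_{i,j=0}^{n−1} equals f_n(α) · det(m_{i+j})_{i,j=0}^{n−1}. -/
import Mathlib


/-- `motzkinGF s t n k` is the weighted Motzkin path generating function `m(n,k)`:
`m(0,k) = [k = 0]`, `m(n,k) = 0` for `k < 0`, and
`m(n,k) = m(n-1,k-1) + s_k m(n-1,k) + t_k m(n-1,k+1)` for `n ≥ 1`, `k ≥ 0`. -/
def motzkinGF (s t : ℕ → ℝ) : ℕ → ℤ → ℝ
  | 0, k => if k = 0 then 1 else 0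
  | n+1, k =>
      if k < 0 then 0
      else motzkinGF s t n (k-1) + s k.toNat * motzkinGF s t n k
             + t k.toNat * motzkinGF s t n (k+1)

/-- The polynomials `f_n(α)`: `f_0 = 1`, `f_1 = α + s_0`, and
`f_n(α) = (α + s_{n-1}) f_{n-1}(α) - t_{n-2} f_{n-2}(α)` for `n ≥ 2`. -/
def fpoly (s t : ℕ → ℝ) (α : ℝ) : ℕ → ℝ
  | 0 => 1
  | 1 => α + s 0
  | n+2 => (α + s (n+1)) * fpoly s t α (n+1) - t n * fpoly s t α n

variable (s t : ℕ → ℝ)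

lemma motzkin_rec (n k : ℕ) :
    motzkinGF s t (n+1) k = motzkinGF s t n ((k:ℤ)-1) + s k * motzkinGF s t n k
      + t k * motzkinGF s t n ((k:ℤ)+1) := by
  simp [motzkinGF]

lemma motzkin_neg (n : ℕ) (k : ℤ) (h : k < 0) : motzkinGF s t n k = 0 := by
  cases n <;> simp [motzkinGF, h] <;> omega

lemma motzkin_gt : ∀ (n : ℕ) (k : ℤ), (n:ℤ) < k → motzkinGF s t n k = 0 := by
  intro n
  induction n with
  | zero => intro k h; simp [motzkinGF]; omega
  | succ n ih =>
      intro k h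
      have hk : ¬ (k < 0) := by omega
      simp only [motzkinGF, if_neg hk]
      rw [ih (k-1) (by omega), ih k (by omega), ih (k+1) (by omega)]
      ring

lemma motzkin_diag : ∀ n : ℕ, motzkinGF s t n n = 1 := by
  intro n
  induction n with
  | zero => simp [motzkinGF]
  | succ n ih =>
      rw [show ((n+1 : ℕ) : ℤ) = ((n+1 : ℕ) : ℤ) from rfl, motzkin_rec]
      push_cast
      rw [show (n : ℤ) + 1 - 1 = (n:ℤ) from by ring]
      rw [motzkin_gt s t n ((n:ℤ)+1) (by omega), motzkin_gt s t n ((n:ℤ)+1+1) (by omega)]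
      rw [ih]; ring

def cw (t : ℕ → ℝ) (k : ℕ) : ℝ := ∏ l ∈ Finset.range k, t l

lemma cw_succ (k : ℕ) : cw t (k+1) = cw t k * t k := Finset.prod_range_succ t k

def Ssum (N a b : ℕ) : ℝ :=
  ∑ k ∈ Finset.range N, cw t k * motzkinGF s t a k * motzkinGF s t b k

-- shrink range using vanishing of the b-factor
lemma Ssum_shrink {M N b : ℕ} (a : ℕ) (h : b + 1 ≤ M) (hMN : M ≤ N) :
    Ssum s t N a b = Ssum s t M a b := by
  unfold Ssum
  rw [← Finset.sum_subset (Finset.range_subset_range.2 hMN)]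
  intro k hk hk2
  rw [motzkin_gt s t b k (by simp at hk2 ⊢; omega)]
  ring

lemma shift_aux (a b N : ℕ) (hN : a + 2 ≤ N) :
    ∑ k ∈ Finset.range N, cw t k * motzkinGF s t a ((k:ℤ)-1) * motzkinGF s t b k
      = ∑ k ∈ Finset.range N, cw t k * t k * motzkinGF s t a k * motzkinGF s t b ((k:ℤ)+1) := by
  obtain ⟨M, rfl⟩ : ∃ M, N = M + 1 := ⟨N - 1, by omega⟩
  rw [Finset.sum_range_succ', Finset.sum_range_succ]
  have h1 : motzkinGF s t a (((0:ℕ):ℤ) - 1) = 0 := motzkin_neg s t a _ (by norm_num)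
  have h2 : motzkinGF s t a ((M:ℕ):ℤ) = 0 :=
    motzkin_gt s t a _ (by exact_mod_cast (by omega : a < M))
  rw [h1, h2]
  simp only [mul_zero, zero_mul, add_zero, mul_zero]
  apply Finset.sum_congr rfl
  intro k hk
  rw [cw_succ]
  push_cast
  rw [show (k:ℤ) + 1 - 1 = (k:ℤ) from by ring]

lemma Ssum_swap (a b N : ℕ) (ha : a + 2 ≤ N) (hb : b + 2 ≤ N) :
    Ssum s t N (a+1) b = Ssum s t N a (b+1) := by
  have L : Ssum s t N (a+1) b
      = (∑ k ∈ Finset.range N, cw t k * motzkinGF s t a ((k:ℤ)-1) * motzkinGF s t b k)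
        + ((∑ k ∈ Finset.range N, cw t k * s k * motzkinGF s t a k * motzkinGF s t b k)
        + (∑ k ∈ Finset.range N, cw t k * t k * motzkinGF s t b k * motzkinGF s t a ((k:ℤ)+1))) := by
    unfold Ssum
    rw [← Finset.sum_add_distrib, ← Finset.sum_add_distrib]
    refine Finset.sum_congr rfl fun k _ => ?_
    rw [motzkin_rec]; ring
  have R : Ssum s t N a (b+1)
      = (∑ k ∈ Finset.range N, cw t k * t k * motzkinGF s t a k * motzkinGF s t b ((k:ℤ)+1))
        + ((∑ k ∈ Finset.range N, cw t k * s k * motzkinGF s t a k * motzkinGF s t b k)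
        + (∑ k ∈ Finset.range N, cw t k * motzkinGF s t b ((k:ℤ)-1) * motzkinGF s t a k)) := by
    unfold Ssum
    rw [← Finset.sum_add_distrib, ← Finset.sum_add_distrib]
    refine Finset.sum_congr rfl fun k _ => ?_
    rw [motzkin_rec]; ring
  rw [L, R, shift_aux s t a b N ha, shift_aux s t b a N hb]

lemma motzkin_zero_ne (k : ℤ) (h : k ≠ 0) : motzkinGF s t 0 k = 0 := by
  simp [motzkinGF, h]

lemma Ssum_moment : ∀ (a b N : ℕ), a + b + 2 ≤ N → Ssum s t N a b = motzkinGF s t (a+b) 0 := by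
  intro a
  induction a with
  | zero =>
      intro b N hN
      obtain ⟨M, rfl⟩ : ∃ M, N = M + 1 := ⟨N - 1, by omega⟩
      unfold Ssum
      rw [Finset.sum_range_succ']
      have : ∀ k ∈ Finset.range M,
          cw t (k+1) * motzkinGF s t 0 ((k+1 : ℕ)) * motzkinGF s t b ((k+1 : ℕ)) = 0 := by
        intro k _
        rw [motzkin_zero_ne s t _ (by exact_mod_cast Nat.succ_ne_zero k)]
        ring
      rw [Finset.sum_congr rfl this]
      simp [cw, motzkinGF]
  | succ a ih =>
      intro b N hN
      rw [Ssum_swap s t a b N (by omega) (by omega), ih (b+1) N (by omega)]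
      congr 1
      omega

lemma fpoly_rev (α : ℝ) : ∀ (n : ℕ) (s t : ℕ → ℝ),
    fpoly s t α (n+2) = (α + s 0) * fpoly (fun i => s (i+1)) (fun i => t (i+1)) α (n+1)
      - t 0 * fpoly (fun i => s (i+2)) (fun i => t (i+2)) α n := by
  intro n
  induction n using Nat.strong_induction_on with
  | _ n ih =>
    match n with
    | 0 => intro s t; simp [fpoly]; ring
    | 1 => intro s t; simp [fpoly]; ring
    | (m+2) =>
      intro s t
      have h1 := ih (m+1) (by omega) s t
      have h2 := ih m (by omega) s t
      rw [show fpoly s t α (m+2+2) = (α + s (m+3)) * fpoly s t α (m+3) - t (m+2) * fpoly s t α (m+2) from rfl,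
        h1, h2]
      rw [show fpoly (fun i => s (i+1)) (fun i => t (i+1)) α (m+2+1)
            = (α + s (m+3)) * fpoly (fun i => s (i+1)) (fun i => t (i+1)) α (m+2)
              - t (m+2) * fpoly (fun i => s (i+1)) (fun i => t (i+1)) α (m+1) from rfl]
      rw [show fpoly (fun i => s (i+2)) (fun i => t (i+2)) α (m+2)
            = (α + s (m+3)) * fpoly (fun i => s (i+2)) (fun i => t (i+2)) α (m+1)
              - t (m+2) * fpoly (fun i => s (i+2)) (fun i => t (i+2)) α m from rfl]
      ring

def tri (s t : ℕ → ℝ) (α : ℝ) (n : ℕ) : Matrix (Fin n) (Fin n) ℝ :=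
  Matrix.of fun j k =>
    if (j:ℕ) = (k:ℕ) then α + s (k:ℕ)
    else if (j:ℕ) = (k:ℕ)+1 then t (k:ℕ)
    else if (j:ℕ)+1 = (k:ℕ) then 1 else 0

lemma tri_det (α : ℝ) : ∀ (n : ℕ) (s t : ℕ → ℝ), (tri s t α n).det = fpoly s t α n := by
  intro n
  induction n using Nat.strong_induction_on with
  | _ n ih =>
    match n with
    | 0 => intro s t; simp [fpoly, Matrix.det_isEmpty]
    | 1 => intro s t; simp [Matrix.det_fin_one, tri, fpoly]
    | (m+2) =>
      intro s t
      rw [Matrix.det_succ_column_zero, Fin.sum_univ_succ, Fin.sum_univ_succ]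
      have htail : ∀ i : Fin m,
          (-1:ℝ)^((i.succ.succ : Fin (m+2)) : ℕ) * tri s t α (m+2) i.succ.succ 0
            * ((tri s t α (m+2)).submatrix i.succ.succ.succAbove Fin.succ).det = 0 := by
        intro i
        have : tri s t α (m+2) i.succ.succ 0 = 0 := by
          simp [tri, Matrix.of_apply, Fin.val_succ]
        rw [this]; ring
      rw [Finset.sum_congr rfl (fun i _ => htail i), Finset.sum_const_zero, add_zero]
      have hm0 : (tri s t α (m+2)).submatrix (0 : Fin (m+2)).succAbove Fin.succ
          = tri (fun i => s (i+1)) (fun i => t (i+1)) α (m+1) := by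
        ext i j
        simp only [Matrix.submatrix_apply, Fin.succAbove_zero, tri, Matrix.of_apply, Fin.val_succ]
        split_ifs <;> first | rfl | omega
      have hm1 : ((tri s t α (m+2)).submatrix (1 : Fin (m+2)).succAbove Fin.succ).det
          = (tri (fun i => s (i+2)) (fun i => t (i+2)) α m).det := by
        rw [Matrix.det_succ_row_zero, Fin.sum_univ_succ]
        have hrow0 : ∀ j : Fin m,
            (-1:ℝ)^((j.succ : Fin (m+1)) : ℕ)
              * (tri s t α (m+2)).submatrix (1 : Fin (m+2)).succAbove Fin.succ 0 j.succ
              * (((tri s t α (m+2)).submatrix (1 : Fin (m+2)).succAbove Fin.succ).submatrix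
                  Fin.succ j.succ.succAbove).det = 0 := by
          intro j
          have : (tri s t α (m+2)).submatrix (1 : Fin (m+2)).succAbove Fin.succ 0 j.succ = 0 := by
            simp [Matrix.submatrix_apply, Fin.one_succAbove_zero, tri, Fin.val_succ]
          rw [this]; ring
        rw [Finset.sum_congr rfl (fun j _ => hrow0 j), Finset.sum_const_zero, add_zero]
        have h00 : (tri s t α (m+2)).submatrix (1 : Fin (m+2)).succAbove Fin.succ 0 0 = 1 := by
          simp [Matrix.submatrix_apply, Fin.one_succAbove_zero, tri]
        rw [h00]
        have hsub : ((tri s t α (m+2)).submatrix (1 : Fin (m+2)).succAbove Fin.succ).submatrix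
            Fin.succ (0 : Fin (m+1)).succAbove = tri (fun i => s (i+2)) (fun i => t (i+2)) α m := by
          ext i j
          have hrow : ((1 : Fin (m+2)).succAbove i.succ : ℕ) = (i:ℕ) + 2 := by
            rw [show (1 : Fin (m+2)) = (0 : Fin (m+1)).succ from rfl, Fin.succ_succAbove_succ]
            simp [Fin.val_succ]
          simp only [Matrix.submatrix_apply, Fin.succAbove_zero, tri, Matrix.of_apply,
            Fin.val_succ, hrow]
          split_ifs <;> first | rfl | omega
        rw [hsub]
        simp
      have e0 : tri s t α (m+2) 0 0 = α + s 0 := by simp [tri]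
      have e1 : tri s t α (m+2) 1 0 = t 0 := by simp [tri]
      simp only [Fin.succ_zero_eq_one]
      rw [e0, e1, hm0, hm1, ih (m+1) (by omega), ih m (by omega), fpoly_rev]
      simp
      ring

lemma Ssum_moment' (a b N : ℕ) (h : b + 1 ≤ N) :
    Ssum s t N a b = motzkinGF s t (a+b) 0 := by
  rw [show Ssum s t N a b = Ssum s t (N + (a+b+2)) a b from
      (Ssum_shrink s t a h (by omega)).symm,
    Ssum_moment s t a b _ (by omega)]

section Main

variable (α : ℝ) (n : ℕ)

noncomputable def Lmat : Matrix (Fin n) (Fin n) ℝ :=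
  Matrix.of fun i k => motzkinGF s t (i:ℕ) ((k:ℕ):ℤ)

noncomputable def Lmat' : Matrix (Fin n) (Fin n) ℝ :=
  Matrix.of fun i k => α * motzkinGF s t (i:ℕ) ((k:ℕ):ℤ) + motzkinGF s t ((i:ℕ)+1) ((k:ℕ):ℤ)

noncomputable def Dmat : Matrix (Fin n) (Fin n) ℝ :=
  Matrix.diagonal fun k => cw t (k:ℕ)

lemma Lmat_det : (Lmat s t n).det = 1 := by
  rw [Matrix.det_of_lowerTriangular (Lmat s t n)
    (fun i j h => motzkin_gt s t _ _ (by exact_mod_cast h))]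
  simp [Lmat, motzkin_diag]

lemma key_mul (i k : Fin n) :
    (∑ j : Fin n, motzkinGF s t (i:ℕ) ((j:ℕ):ℤ) * tri s t α n j k)
      = α * motzkinGF s t (i:ℕ) ((k:ℕ):ℤ) + motzkinGF s t ((i:ℕ)+1) ((k:ℕ):ℤ) := by
  have hsplit : ∀ j : Fin n, motzkinGF s t (i:ℕ) ((j:ℕ):ℤ) * tri s t α n j k
      = (fun j' : ℕ =>
          (if j' = (k:ℕ) then (α + s (k:ℕ)) * motzkinGF s t (i:ℕ) (j':ℤ) else 0)
          + (if j' = (k:ℕ)+1 then t (k:ℕ) * motzkinGF s t (i:ℕ) (j':ℤ) else 0)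
          + (if j' + 1 = (k:ℕ) then motzkinGF s t (i:ℕ) (j':ℤ) else 0)) (j:ℕ) := by
    intro j
    simp only [tri, Matrix.of_apply]
    split_ifs <;> first | ring1 | (exfalso; omega)
  rw [Finset.sum_congr rfl (fun j _ => hsplit j),
    Fin.sum_univ_eq_sum_range (fun j' : ℕ =>
      (if j' = (k:ℕ) then (α + s (k:ℕ)) * motzkinGF s t (i:ℕ) (j':ℤ) else 0)
      + (if j' = (k:ℕ)+1 then t (k:ℕ) * motzkinGF s t (i:ℕ) (j':ℤ) else 0)
      + (if j' + 1 = (k:ℕ) then motzkinGF s t (i:ℕ) (j':ℤ) else 0)) n]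
  rw [Finset.sum_add_distrib, Finset.sum_add_distrib,
    Finset.sum_ite_eq' (Finset.range n) ((k:ℕ)), Finset.sum_ite_eq' (Finset.range n) ((k:ℕ)+1)]
  have h1 : (if (k:ℕ) ∈ Finset.range n then (α + s (k:ℕ)) * motzkinGF s t (i:ℕ) ((k:ℕ):ℤ) else 0)
      = (α + s (k:ℕ)) * motzkinGF s t (i:ℕ) ((k:ℕ):ℤ) := by
    rw [if_pos (Finset.mem_range.2 k.isLt)]
  have h2 : (if (k:ℕ)+1 ∈ Finset.range n then t (k:ℕ) * motzkinGF s t (i:ℕ) (((k:ℕ)+1:ℕ):ℤ) else 0)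
      = t (k:ℕ) * motzkinGF s t (i:ℕ) (((k:ℕ):ℤ)+1) := by
    by_cases h : (k:ℕ)+1 < n
    · rw [if_pos (Finset.mem_range.2 h)]; push_cast; ring_nf
    · rw [if_neg (by simp; omega)]
      rw [motzkin_gt s t (i:ℕ) _ (by push_cast; have := i.isLt; have := k.isLt; omega)]
      ring
  have h3 : (∑ j' ∈ Finset.range n, if j' + 1 = (k:ℕ) then motzkinGF s t (i:ℕ) (j':ℤ) else 0)
      = motzkinGF s t (i:ℕ) (((k:ℕ):ℤ)-1) := by
    rcases Nat.eq_zero_or_pos (k:ℕ) with hk | hk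
    · rw [hk]
      rw [Finset.sum_congr rfl (fun j' _ => if_neg (by omega))]
      simp [motzkin_neg s t (i:ℕ) (-1:ℤ) (by norm_num)]
    · obtain ⟨c, hc⟩ : ∃ c, (k:ℕ) = c + 1 := ⟨(k:ℕ)-1, by omega⟩
      have : ∀ j' : ℕ, (j' + 1 = (k:ℕ)) = (j' = c) := by intro j'; simp; omega
      simp_rw [this]
      rw [Finset.sum_ite_eq' (Finset.range n) c, if_pos (Finset.mem_range.2 (by have := k.isLt; omega))]
      congr 1
      push_cast [hc]; ring
  rw [h1, h2, h3, motzkin_rec]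
  ring

lemma Lmat'_eq : Lmat' s t α n = Lmat s t n * tri s t α n := by
  ext i k
  rw [Matrix.mul_apply]
  exact (key_mul s t α n i k).symm

lemma hankel_fact :
    (Matrix.of fun i j : Fin n => motzkinGF s t ((i:ℕ) + (j:ℕ)) 0)
      = Lmat s t n * Dmat t n * (Lmat s t n).transpose := by
  ext i j
  rw [Matrix.mul_apply]
  simp only [Matrix.mul_diagonal, Matrix.transpose_apply, Matrix.of_apply, Lmat, Dmat]
  rw [← Ssum_moment' s t (i:ℕ) (j:ℕ) n (by have := j.isLt; omega)]
  unfold Ssum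
  rw [← Fin.sum_univ_eq_sum_range (fun k => cw t k * motzkinGF s t (i:ℕ) (k:ℤ) * motzkinGF s t (j:ℕ) (k:ℤ)) n]
  exact Finset.sum_congr rfl fun k _ => by ring

lemma hankel_fact' :
    (Matrix.of fun i j : Fin n =>
        α * motzkinGF s t ((i:ℕ) + (j:ℕ)) 0 + motzkinGF s t ((i:ℕ) + (j:ℕ) + 1) 0)
      = Lmat' s t α n * Dmat t n * (Lmat s t n).transpose := by
  ext i j
  rw [Matrix.mul_apply]
  simp only [Matrix.mul_diagonal, Matrix.transpose_apply, Matrix.of_apply, Lmat', Lmat, Dmat]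
  rw [← Ssum_moment' s t (i:ℕ) (j:ℕ) n (by have := j.isLt; omega),
    show (i:ℕ) + (j:ℕ) + 1 = ((i:ℕ)+1) + (j:ℕ) from by omega,
    ← Ssum_moment' s t ((i:ℕ)+1) (j:ℕ) n (by have := j.isLt; omega)]
  unfold Ssum
  rw [Finset.mul_sum, ← Finset.sum_add_distrib,
    ← Fin.sum_univ_eq_sum_range (fun k => α * (cw t k * motzkinGF s t (i:ℕ) (k:ℤ) * motzkinGF s t (j:ℕ) (k:ℤ)) + cw t k * motzkinGF s t ((i:ℕ)+1) (k:ℤ) * motzkinGF s t (j:ℕ) (k:ℤ)) n]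
  exact Finset.sum_congr rfl fun k _ => by ring

end Main

/-- Eq. (3.2): for `n ≥ 1` and real `α`,
`det(α m_{i+j} + m_{i+j+1})_{i,j=0}^{n-1} = f_n(α) · det(m_{i+j})_{i,j=0}^{n-1}`. -/
theorem hankel_two_term_moments (s t : ℕ → ℝ) (ht : ∀ n, t n ≠ 0)
    (n : ℕ) (hn : 0 < n) (α : ℝ) :
    Matrix.det (Matrix.of fun i j : Fin n =>
        α * motzkinGF s t ((i : ℕ) + (j : ℕ)) 0
          + motzkinGF s t ((i : ℕ) + (j : ℕ) + 1) 0)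
      = fpoly s t α n
        * Matrix.det (Matrix.of fun i j : Fin n =>
            motzkinGF s t ((i : ℕ) + (j : ℕ)) 0) := by
  rw [hankel_fact, hankel_fact', Lmat'_eq]
  simp only [Matrix.det_mul, Matrix.det_transpose]
  rw [Lmat_det, tri_det]
  ring
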